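/- Let (A,∘,B) be a quadratic Novikov algebra and J a nonzero isotropic ideal of (A,∘). Then J^⊥∘J = 0 and J∘J^⊥ = 0. -/
import Mathlib

/-- If J is a nonzero isotropic ideal of a quadratic Novikov algebra, then
J^⊥∘J = 0 and J∘J^⊥ = 0. -/
theorem quadratic_novikov_isotropic_ideal_annihilates
    {k A : Type*} [Field k] [CharZero k] [AddCommGroup A] [Module k A]
    (mul : A →ₗ[k] A →ₗ[k] A) (B : LinearMap.BilinForm k A)
    (hnov1 : ∀ a b c, mul (mul a b) c - mul a (mul b c) = mul (mul b a) c - mul b (mul a c))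
    (hnov2 : ∀ a b c, mul (mul a b) c = mul (mul a c) b)
    (hsym : ∀ a b, B a b = B b a)
    (hnd : ∀ a, (∀ b, B a b = 0) → a = 0)
    (hinv : ∀ a b c, B (mul a b) c = -(B b (mul a c + mul c a)))
    (J : Submodule k A) (hJne : J ≠ ⊥)
    (hJideal : ∀ a ∈ J, ∀ x : A, mul a x ∈ J ∧ mul x a ∈ J)
    (hJiso : ∀ x ∈ J, ∀ y ∈ J, B x y = 0) :
    (∀ x, (∀ b ∈ J, B x b = 0) → ∀ y ∈ J, mul x y = 0) ∧
    (∀ x, (∀ b ∈ J, B x b = 0) → ∀ y ∈ J, mul y x = 0) := by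
  constructor
  · intro x hx y hy
    apply hnd
    intro c
    have h1 : B (mul x y) c = B (mul c y) x := by
      rw [hinv, hinv, add_comm]
    rw [h1, hsym]
    exact hx _ ((hJideal y hy c).2)
  · intro x hx y hy
    apply hnd
    intro c
    rw [hinv, map_add, hx _ ((hJideal y hy c).1), hx _ ((hJideal y hy c).2)]
    simp
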